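/- arXiv:2303.01861 — 4 statements merged into one kernel-verified Lean document; each statement's English description precedes it below -/
import Mathlib

section
/- There exists a constant C ≥ 1, depending only on d and C_f, such that for every t > 0 and every x ∈ ℝ^d one has C⁻¹ · exp(− d · (‖x‖∞ − m_t)_+² / σ_t²) ≤ p_t(x) ≤ C · exp(− (‖x‖∞ − m_t)_+² / (2σ_t²)). -/
/-!
The Gaussian kernel of the forward process factorises over coordinates, and `p0` is squeezed
between `Cf⁻¹` and `Cf` times the indicator of the cube `[-1, 1]^d`, so up to the factor `Cf^{±1}`
the density `p_t(x)` is the product of the one-dimensional integrals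
`∫_{-1}^{1} φ_σ(x_i - m u) du`, with `φ_σ` the centred Gaussian density of variance `σ²`.
Writing `a_i = (|x_i| - m)_+`, each such integral lies between `e^{-a_i²/σ²} / (√(2π) e)` and
`2 e^{-a_i²/(2σ²)}`. For the upper bound, Pythagoras at the projection of `x_i` onto `[-m, m]`
splits off `e^{-a_i²/(2σ²)}` and leaves a Gaussian integral; for the lower bound, on an interval of
`u` of length `σ` on which `m u` stays within `σ` of that projection the exponent is at least
`-a_i²/σ² - 1`. Finally
`max_i a_i = (‖x‖∞ - m)_+`.
-/

open MeasureTheory Real ProbabilityTheory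

lemma posPart_abs_sub_sq_add_sq_le {M x z : ℝ} (hz : |z| ≤ M) :
    max (|x| - M) 0 ^ 2 + (max (-M) (min M x) - z) ^ 2 ≤ (x - z) ^ 2 := by
  rw [abs_le] at hz
  rcases le_total M x with hx | hx
  · rw [abs_of_nonneg (by linarith), min_eq_left hx, max_eq_left (sub_nonneg.2 hx),
      max_eq_right (by linarith : -M ≤ M)]
    nlinarith
  rcases le_total x (-M) with hx' | hx'
  · rw [abs_of_nonpos (by linarith), min_eq_right hx, max_eq_left hx',
      max_eq_left (by linarith : 0 ≤ -x - M)]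
    nlinarith
  · rw [min_eq_right hx, max_eq_right hx', max_eq_right (by cases abs_cases x <;> linarith)]
    nlinarith

lemma abs_sub_clamp {M : ℝ} (hM : 0 ≤ M) (x : ℝ) :
    |x - max (-M) (min M x)| = max (|x| - M) 0 := by
  rcases le_total M x with hx | hx
  · rw [abs_of_nonneg (by linarith : 0 ≤ x), min_eq_left hx, max_eq_right (by linarith : -M ≤ M),
      max_eq_left (sub_nonneg.2 hx), abs_of_nonneg (sub_nonneg.2 hx)]
  rcases le_total x (-M) with hx' | hx'
  · rw [abs_of_nonpos (by linarith : x ≤ 0), min_eq_right hx, max_eq_left hx',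
      max_eq_left (by linarith : 0 ≤ -x - M), abs_of_nonpos (by linarith)]
    ring
  · rw [min_eq_right hx, max_eq_right hx', sub_self, abs_zero,
      max_eq_right (by cases abs_cases x <;> linarith)]

noncomputable def gaussKernel (M S x u : ℝ) : ℝ :=
  (√(2 * π * S ^ 2))⁻¹ * exp (-(x - M * u) ^ 2 / (2 * S ^ 2))

lemma gaussKernel_nonneg (M S x u : ℝ) : 0 ≤ gaussKernel M S x u := by
  unfold gaussKernel; positivity

lemma continuous_gaussKernel (M S x : ℝ) : Continuous (gaussKernel M S x) := by
  unfold gaussKernel; fun_prop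

lemma gaussKernel_le_inv_sqrt (M S x u : ℝ) : gaussKernel M S x u ≤ (√(2 * π * S ^ 2))⁻¹ := by
  unfold gaussKernel
  refine mul_le_of_le_one_right (by positivity) (exp_le_one_iff.2 ?_)
  exact div_nonpos_of_nonpos_of_nonneg (neg_nonpos.2 (sq_nonneg _)) (by positivity)

lemma gaussKernel_eq_gaussianPDFReal (M S x u : ℝ) :
    gaussKernel M S x u = gaussianPDFReal x (S ^ 2).toNNReal (M * u) := by
  rw [gaussKernel, gaussianPDFReal, Real.coe_toNNReal _ (sq_nonneg S), ← neg_sub, neg_sq]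

lemma integral_gaussKernel {M S : ℝ} (hM : 0 < M) (hS : 0 < S) (x : ℝ) :
    ∫ u, gaussKernel M S x u = M⁻¹ := by
  simp_rw [gaussKernel_eq_gaussianPDFReal]
  rw [Measure.integral_comp_mul_left (gaussianPDFReal x _) M,
    integral_gaussianPDFReal_eq_one x (by positivity),
    smul_eq_mul, mul_one, abs_of_pos (inv_pos.2 hM)]

lemma integrable_gaussKernel {M : ℝ} (hM : M ≠ 0) (S x : ℝ) :
    Integrable (gaussKernel M S x) := by
  simp_rw [funext (gaussKernel_eq_gaussianPDFReal M S x)]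
  exact (integrable_gaussianPDFReal x _).comp_mul_left' hM

lemma rpow_mul_exp_eq_prod_gaussKernel (d : ℕ) (M S : ℝ) (x y : Fin d → ℝ) :
    (2 * π * S ^ 2) ^ (-(d : ℝ) / 2) * exp (-(∑ i, (x i - M * y i) ^ 2) / (2 * S ^ 2)) =
      ∏ i, gaussKernel M S (x i) (y i) := by
  have h : 0 ≤ 2 * π * S ^ 2 := by positivity
  have hpow : (2 * π * S ^ 2) ^ (-(d : ℝ) / 2) = (√(2 * π * S ^ 2))⁻¹ ^ d := by
    rw [sqrt_eq_rpow, ← rpow_neg h, ← rpow_mul_natCast h]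
    ring_nf
  rw [hpow]
  simp only [gaussKernel, Finset.prod_mul_distrib, Finset.prod_const, Finset.card_univ,
    Fintype.card_fin, ← exp_sum, neg_div, Finset.sum_div, Finset.sum_neg_distrib]

lemma gaussKernel_le_exp_mul_gaussKernel_clamp {M S x u : ℝ} (hM : 0 ≤ M) (hu : |u| ≤ 1) :
    gaussKernel M S x u ≤
      exp (-max (|x| - M) 0 ^ 2 / (2 * S ^ 2)) * gaussKernel M S (max (-M) (min M x)) u := by
  have hMu : |M * u| ≤ M := by
    rw [abs_mul, abs_of_nonneg hM]; exact mul_le_of_le_one_right hM hu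
  have := posPart_abs_sub_sq_add_sq_le (x := x) hMu
  unfold gaussKernel
  rw [mul_left_comm, ← exp_add, ← add_div]
  gcongr
  linarith

lemma setIntegral_Icc_gaussKernel_le_two {M S : ℝ} (hM : 0 < M) (hS : 0 < S)
    (hMS : M ^ 2 + S ^ 2 = 1) (x : ℝ) :
    ∫ u in Set.Icc (-1) 1, gaussKernel M S x u ≤ 2 := by
  -- since `M² + S² = 1`, either `M² ≥ 1/2` and already the integral over `ℝ`, `M⁻¹`, is at most `2`,
  -- or `S² ≥ 1/2` and the kernel itself is at most `1`
  rcases le_total (1 / 2) (M ^ 2) with hM2 | hM2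
  · calc ∫ u in Set.Icc (-1) 1, gaussKernel M S x u ≤ ∫ u, gaussKernel M S x u :=
          setIntegral_le_integral (integrable_gaussKernel hM.ne' S x)
            (ae_of_all _ (gaussKernel_nonneg M S x))
      _ = M⁻¹ := integral_gaussKernel hM hS x
      _ ≤ 2 := by rw [inv_le_comm₀ hM two_pos]; nlinarith
  · have hsqrt : 1 ≤ √(2 * π * S ^ 2) := one_le_sqrt.2 (by nlinarith [pi_gt_three])
    calc ∫ u in Set.Icc (-1) 1, gaussKernel M S x u
        ≤ ∫ _ in Set.Icc (-1 : ℝ) 1, (√(2 * π * S ^ 2))⁻¹ :=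
          setIntegral_mono_on (continuous_gaussKernel M S x).integrableOn_Icc
            (integrableOn_const (by simp)) measurableSet_Icc
            (fun u _ => gaussKernel_le_inv_sqrt M S x u)
      _ = 2 * (√(2 * π * S ^ 2))⁻¹ := by
          rw [setIntegral_const, volume_real_Icc_of_le (by norm_num), smul_eq_mul]; norm_num
      _ ≤ 2 := mul_le_of_le_one_right zero_le_two (inv_le_one_of_one_le₀ hsqrt)

lemma setIntegral_Icc_gaussKernel_le {M S : ℝ} (hM : 0 < M) (hS : 0 < S)
    (hMS : M ^ 2 + S ^ 2 = 1) (x : ℝ) :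
    ∫ u in Set.Icc (-1) 1, gaussKernel M S x u ≤ 2 * exp (-max (|x| - M) 0 ^ 2 / (2 * S ^ 2)) := by
  set p := max (-M) (min M x)
  set E := exp (-max (|x| - M) 0 ^ 2 / (2 * S ^ 2))
  calc ∫ u in Set.Icc (-1) 1, gaussKernel M S x u
      ≤ ∫ u in Set.Icc (-1) 1, E * gaussKernel M S p u :=
        setIntegral_mono_on (continuous_gaussKernel M S x).integrableOn_Icc
          ((continuous_gaussKernel M S p).integrableOn_Icc.const_mul E) measurableSet_Icc
          (fun u hu => gaussKernel_le_exp_mul_gaussKernel_clamp hM.le (abs_le.2 hu))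
    _ = E * ∫ u in Set.Icc (-1) 1, gaussKernel M S p u := integral_const_mul E _
    _ ≤ E * 2 := by gcongr; exact setIntegral_Icc_gaussKernel_le_two hM hS hMS p
    _ = 2 * E := mul_comm E 2

lemma le_setIntegral_Icc_gaussKernel {M S : ℝ} (hM0 : 0 < M) (hM1 : M ≤ 1) (hS0 : 0 < S)
    (hS1 : S ≤ 1) (x : ℝ) :
    (√(2 * π) * exp 1)⁻¹ * exp (-max (|x| - M) 0 ^ 2 / S ^ 2) ≤
      ∫ u in Set.Icc (-1) 1, gaussKernel M S x u := by
  set a := max (|x| - M) 0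
  set p := max (-M) (min M x)
  have hxp : |x - p| = a := abs_sub_clamp hM0.le x
  obtain ⟨c, hpc, hc⟩ : ∃ c, p = M * c ∧ -1 ≤ c ∧ c ≤ 1 := by
    refine ⟨p / M, (mul_div_cancel₀ p hM0.ne').symm, ?_, ?_⟩
    · rw [le_div_iff₀ hM0]; linarith [le_max_left (-M) (min M x)]
    · rw [div_le_one hM0]; exact max_le (by linarith) (min_le_left _ _)
  -- the image of `[-1, 1]` under the homothety of ratio `S / 2` centred at `c`
  set lo := c - S * (c + 1) / 2 with hlo_def
  set hi := c + S * (1 - c) / 2 with hhi_def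
  have hsub : Set.Icc lo hi ⊆ Set.Icc (-1) 1 :=
    Set.Icc_subset_Icc (by nlinarith) (by nlinarith)
  have hbound : ∀ u ∈ Set.Icc lo hi,
      (√(2 * π * S ^ 2))⁻¹ * (exp (-1) * exp (-a ^ 2 / S ^ 2)) ≤ gaussKernel M S x u := by
    rintro u ⟨hlo, hhi⟩
    have hcu : |M * (c - u)| ≤ S := by
      rw [abs_mul, abs_of_pos hM0]
      have : |c - u| ≤ S := abs_le.2 ⟨by nlinarith, by nlinarith⟩
      nlinarith [abs_nonneg (c - u)]
    have hxu : |x - M * u| ≤ a + S := by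
      have hsplit : x - M * u = (x - p) + M * (c - u) := by rw [hpc]; ring
      rw [hsplit, ← hxp]
      exact (abs_add_le _ _).trans (add_le_add le_rfl hcu)
    have hsq : (x - M * u) ^ 2 ≤ 2 * a ^ 2 + 2 * S ^ 2 := by
      nlinarith [sq_abs (x - M * u), abs_nonneg (x - M * u), sq_nonneg (a - S)]
    have hexp : (x - M * u) ^ 2 / (2 * S ^ 2) ≤ a ^ 2 / S ^ 2 + 1 := by
      rw [show a ^ 2 / S ^ 2 + 1 = (2 * a ^ 2 + 2 * S ^ 2) / (2 * S ^ 2) by field_simp]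
      gcongr
    unfold gaussKernel
    rw [← exp_add]
    gcongr
    rw [neg_div, neg_div]
    linarith
  have hsqrt : √(2 * π * S ^ 2) = √(2 * π) * S := by
    rw [sqrt_mul (by positivity), sqrt_sq hS0.le]
  calc (√(2 * π) * exp 1)⁻¹ * exp (-a ^ 2 / S ^ 2)
      = ∫ _ in Set.Icc lo hi,
          (√(2 * π * S ^ 2))⁻¹ * (exp (-1) * exp (-a ^ 2 / S ^ 2)) := by
        rw [setIntegral_const, volume_real_Icc_of_le (by nlinarith), smul_eq_mul, hsqrt,
          exp_neg]
        field_simp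
        ring
    _ ≤ ∫ u in Set.Icc lo hi, gaussKernel M S x u :=
        setIntegral_mono_on (integrableOn_const (by simp))
          (continuous_gaussKernel M S x).integrableOn_Icc measurableSet_Icc hbound
    _ ≤ ∫ u in Set.Icc (-1) 1, gaussKernel M S x u :=
        setIntegral_mono_set (continuous_gaussKernel M S x).integrableOn_Icc
          (ae_of_all _ (gaussKernel_nonneg M S x)) hsub.eventuallyLE

section Cube

variable {ι : Type*} [Fintype ι]

lemma prod_indicator_Icc_of_mem (g : ι → ℝ → ℝ) {y : ι → ℝ} (hy : ∀ i, |y i| ≤ 1) :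
    ∏ i, (Set.Icc (-1) 1).indicator (g i) (y i) = ∏ i, g i (y i) :=
  Finset.prod_congr rfl fun i _ => Set.indicator_of_mem (Set.mem_Icc.2 (abs_le.1 (hy i))) _

lemma prod_indicator_Icc_of_notMem (g : ι → ℝ → ℝ) {y : ι → ℝ} (hy : ¬ ∀ i, |y i| ≤ 1) :
    ∏ i, (Set.Icc (-1) 1).indicator (g i) (y i) = 0 := by
  obtain ⟨i, hi⟩ := not_forall.1 hy
  exact Finset.prod_eq_zero (Finset.mem_univ i)
    (Set.indicator_of_notMem (fun h => hi (abs_le.2 (Set.mem_Icc.1 h))) _)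

lemma integrable_prod_indicator_Icc {g : ι → ℝ → ℝ} (hg : ∀ i, Continuous (g i)) :
    Integrable fun y : ι → ℝ => ∏ i, (Set.Icc (-1) 1).indicator (g i) (y i) :=
  Integrable.fintype_prod fun i => (hg i).integrableOn_Icc.integrable_indicator measurableSet_Icc

lemma integral_prod_indicator_Icc (g : ι → ℝ → ℝ) :
    ∫ y : ι → ℝ, ∏ i, (Set.Icc (-1) 1).indicator (g i) (y i) =
      ∏ i, ∫ u in Set.Icc (-1) 1, g i u := by
  simp_rw [volume_pi, integral_fintype_prod_eq_prod, integral_indicator measurableSet_Icc]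

lemma integral_mul_prod_mem_Icc {p0 : (ι → ℝ) → ℝ} {g : ι → ℝ → ℝ} {lo hi : ℝ}
    (hg : ∀ i, Continuous (g i)) (hg0 : ∀ i u, 0 ≤ g i u)
    (hp0meas : Measurable p0) (hp0nn : ∀ y, 0 ≤ p0 y)
    (hp0supp : ∀ y : ι → ℝ, ¬ (∀ i, |y i| ≤ 1) → p0 y = 0)
    (hp0bd : ∀ y : ι → ℝ, (∀ i, |y i| ≤ 1) → lo ≤ p0 y ∧ p0 y ≤ hi) :
    lo * ∏ i, ∫ u in Set.Icc (-1) 1, g i u ≤ ∫ y, p0 y * ∏ i, g i (y i) ∧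
      ∫ y, p0 y * ∏ i, g i (y i) ≤ hi * ∏ i, ∫ u in Set.Icc (-1) 1, g i u := by
  set F : (ι → ℝ) → ℝ := fun y => ∏ i, (Set.Icc (-1) 1).indicator (g i) (y i)
  have hF0 : ∀ y, 0 ≤ F y := fun y =>
    Finset.prod_nonneg fun i _ => Set.indicator_nonneg (fun u _ => hg0 i u) _
  have hp0F : ∀ y, p0 y * ∏ i, g i (y i) = p0 y * F y := fun y => by
    by_cases hy : ∀ i, |y i| ≤ 1
    · simp only [F, prod_indicator_Icc_of_mem g hy]
    · rw [hp0supp y hy, zero_mul, zero_mul]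
  have hlo : ∀ y, lo * F y ≤ p0 y * F y := fun y => by
    by_cases hy : ∀ i, |y i| ≤ 1
    · exact mul_le_mul_of_nonneg_right (hp0bd y hy).1 (hF0 y)
    · simp only [F, prod_indicator_Icc_of_notMem g hy, mul_zero, le_refl]
  have hhi : ∀ y, p0 y * F y ≤ hi * F y := fun y => by
    by_cases hy : ∀ i, |y i| ≤ 1
    · exact mul_le_mul_of_nonneg_right (hp0bd y hy).2 (hF0 y)
    · simp only [F, prod_indicator_Icc_of_notMem g hy, mul_zero, le_refl]
  have hFint : Integrable F := integrable_prod_indicator_Icc hg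
  have hp0Fint : Integrable fun y => p0 y * F y :=
    (hFint.const_mul hi).mono' (hp0meas.aestronglyMeasurable.mul hFint.aestronglyMeasurable)
      (ae_of_all _ fun y => by
        rw [Real.norm_eq_abs, abs_of_nonneg (mul_nonneg (hp0nn y) (hF0 y))]
        exact hhi y)
  simp_rw [hp0F, ← integral_prod_indicator_Icc g, ← integral_const_mul]
  exact ⟨integral_mono (hFint.const_mul lo) hp0Fint hlo,
    integral_mono hp0Fint (hFint.const_mul hi) hhi⟩

lemma sq_posPart_norm_sub_le_sum {M : ℝ} (hM : 0 ≤ M) (x : ι → ℝ) :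
    max (‖x‖ - M) 0 ^ 2 ≤ ∑ i, max (|x i| - M) 0 ^ 2 := by
  set B := √(∑ i, max (|x i| - M) 0 ^ 2)
  have hB : 0 ≤ B := sqrt_nonneg _
  have hxB : ‖x‖ ≤ M + B := by
    refine (pi_norm_le_iff_of_nonneg (by positivity)).2 fun i => ?_
    have : max (|x i| - M) 0 ≤ B := Real.le_sqrt_of_sq_le <|
      Finset.single_le_sum (f := fun i => max (|x i| - M) 0 ^ 2) (fun _ _ => sq_nonneg _)
        (Finset.mem_univ i)
    rw [Real.norm_eq_abs]
    linarith [le_max_left (|x i| - M) 0]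
  calc max (‖x‖ - M) 0 ^ 2 ≤ B ^ 2 := by gcongr; exact max_le (by linarith) hB
    _ = _ := sq_sqrt (by positivity)

lemma prod_setIntegral_Icc_gaussKernel_le {M S : ℝ} (hM : 0 < M) (hS : 0 < S)
    (hMS : M ^ 2 + S ^ 2 = 1) (x : ι → ℝ) :
    ∏ i, ∫ u in Set.Icc (-1) 1, gaussKernel M S (x i) u ≤
      2 ^ Fintype.card ι * exp (-max (‖x‖ - M) 0 ^ 2 / (2 * S ^ 2)) := by
  calc ∏ i, ∫ u in Set.Icc (-1) 1, gaussKernel M S (x i) u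
      ≤ ∏ i, 2 * exp (-max (|x i| - M) 0 ^ 2 / (2 * S ^ 2)) :=
        Finset.prod_le_prod (fun i _ => setIntegral_nonneg measurableSet_Icc
          fun u _ => gaussKernel_nonneg M S (x i) u)
          fun i _ => setIntegral_Icc_gaussKernel_le hM hS hMS (x i)
    _ = 2 ^ Fintype.card ι * exp (-(∑ i, max (|x i| - M) 0 ^ 2) / (2 * S ^ 2)) := by
        rw [Finset.prod_mul_distrib, Finset.prod_const, Finset.card_univ, ← exp_sum, neg_div,
          Finset.sum_div, ← Finset.sum_neg_distrib]
        simp only [neg_div]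
    _ ≤ 2 ^ Fintype.card ι * exp (-max (‖x‖ - M) 0 ^ 2 / (2 * S ^ 2)) := by
        gcongr
        exact sq_posPart_norm_sub_le_sum hM.le x

lemma le_prod_setIntegral_Icc_gaussKernel {M S : ℝ} (hM0 : 0 < M) (hM1 : M ≤ 1) (hS0 : 0 < S)
    (hS1 : S ≤ 1) (x : ι → ℝ) :
    (√(2 * π) * exp 1)⁻¹ ^ Fintype.card ι *
        exp (-(Fintype.card ι : ℝ) * max (‖x‖ - M) 0 ^ 2 / S ^ 2) ≤
      ∏ i, ∫ u in Set.Icc (-1) 1, gaussKernel M S (x i) u := by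
  calc (√(2 * π) * exp 1)⁻¹ ^ Fintype.card ι *
        exp (-(Fintype.card ι : ℝ) * max (‖x‖ - M) 0 ^ 2 / S ^ 2)
      = ∏ _i : ι, (√(2 * π) * exp 1)⁻¹ * exp (-max (‖x‖ - M) 0 ^ 2 / S ^ 2) := by
        rw [Finset.prod_mul_distrib, Finset.prod_const, Finset.prod_const, Finset.card_univ,
          ← exp_nat_mul]
        ring_nf
    _ ≤ ∏ i, (√(2 * π) * exp 1)⁻¹ * exp (-max (|x i| - M) 0 ^ 2 / S ^ 2) := by
        gcongr with i
        exact norm_le_pi_norm x i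
    _ ≤ ∏ i, ∫ u in Set.Icc (-1) 1, gaussKernel M S (x i) u :=
        Finset.prod_le_prod (fun i _ => by positivity)
          fun i _ => le_setIntegral_Icc_gaussKernel hM0 hM1 hS0 hS1 (x i)

end Cube

lemma exp_neg_integral_lt_one {β : ℝ → ℝ} (hβc : ContinuousOn β (Set.Ici 0))
    (hβpos : ∀ s, 0 ≤ s → 0 < β s) {t : ℝ} (ht : 0 < t) :
    exp (-∫ s in (0 : ℝ)..t, β s) < 1 := by
  have hcont : ContinuousOn β (Set.uIcc 0 t) :=
    hβc.mono (by rw [Set.uIcc_of_le ht.le]; exact Set.Icc_subset_Ici_self)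
  exact exp_lt_one_iff.2 (neg_lt_zero.2 (intervalIntegral.intervalIntegral_pos_of_pos_on
    hcont.intervalIntegrable (fun s hs => hβpos s hs.1.le) ht))

theorem statement0_general
    (d : ℕ)
    (βlo βhi : ℝ) (hβlo : 0 < βlo)
    (β : ℝ → ℝ) (hβc : ContinuousOn β (Set.Ici 0))
    (hβb : ∀ t : ℝ, 0 ≤ t → βlo ≤ β t ∧ β t ≤ βhi)
    (m σ : ℝ → ℝ)
    (hm : ∀ t : ℝ, m t = Real.exp (-(∫ s in (0:ℝ)..t, β s)))
    (hσ : ∀ t : ℝ, σ t = Real.sqrt (1 - (m t) ^ 2))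
    (Cf : ℝ) (hCf : 1 ≤ Cf)
    (p0 : (Fin d → ℝ) → ℝ) (hp0meas : Measurable p0)
    (hp0nn : ∀ x, 0 ≤ p0 x)
    (hp0supp : ∀ x : Fin d → ℝ, ¬ (∀ i, |x i| ≤ 1) → p0 x = 0)
    (hp0bd : ∀ x : Fin d → ℝ, (∀ i, |x i| ≤ 1) → Cf⁻¹ ≤ p0 x ∧ p0 x ≤ Cf)
    (p : ℝ → (Fin d → ℝ) → ℝ)
    (hp : ∀ t : ℝ, ∀ x : Fin d → ℝ, p t x =
      ∫ y : Fin d → ℝ, p0 y * ((2 * Real.pi * (σ t) ^ 2) ^ (-(d : ℝ) / 2) *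
        Real.exp (-(∑ i, (x i - m t * y i) ^ 2) / (2 * (σ t) ^ 2)))) :
    ∃ C : ℝ, 1 ≤ C ∧ ∀ t : ℝ, 0 < t → ∀ x : Fin d → ℝ,
      C⁻¹ * Real.exp (-(d : ℝ) * (max (‖x‖ - m t) 0) ^ 2 / (σ t) ^ 2) ≤ p t x ∧
      p t x ≤ C * Real.exp (-(max (‖x‖ - m t) 0) ^ 2 / (2 * (σ t) ^ 2)) := by
  have h2K : 2 ≤ √(2 * π) * exp 1 := by
    have : 2 ≤ √(2 * π) := le_sqrt_of_sq_le (by nlinarith [pi_gt_three])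
    nlinarith [one_le_exp zero_le_one]
  refine ⟨Cf * (√(2 * π) * exp 1) ^ d,
    one_le_mul_of_one_le_of_one_le hCf (one_le_pow₀ (by linarith)), fun t ht x => ?_⟩
  have hm0 : 0 < m t := hm t ▸ exp_pos _
  have hm1 : m t < 1 := hm t ▸ exp_neg_integral_lt_one hβc
    (fun s hs => hβlo.trans_le (hβb s hs).1) ht
  have hσ2 : σ t ^ 2 = 1 - m t ^ 2 := by rw [hσ t, sq_sqrt (by nlinarith)]
  have hσ0 : 0 < σ t := by rw [hσ t]; exact sqrt_pos.2 (by nlinarith)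
  have hσ1 : σ t ≤ 1 := by nlinarith
  have hpt : p t x = ∫ y, p0 y * ∏ i, gaussKernel (m t) (σ t) (x i) (y i) := by
    simp_rw [hp t x, rpow_mul_exp_eq_prod_gaussKernel]
  obtain ⟨hlow, hupp⟩ := integral_mul_prod_mem_Icc (fun i => continuous_gaussKernel _ _ (x i))
    (fun i => gaussKernel_nonneg _ _ (x i)) hp0meas hp0nn hp0supp hp0bd
  have hlow' := le_prod_setIntegral_Icc_gaussKernel hm0 hm1.le hσ0 hσ1 x
  have hupp' := prod_setIntegral_Icc_gaussKernel_le hm0 hσ0 (by rw [hσ2]; ring) x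
  rw [Fintype.card_fin] at hlow' hupp'
  rw [hpt]
  constructor
  · calc (Cf * (√(2 * π) * exp 1) ^ d)⁻¹ * exp (-(d : ℝ) * max (‖x‖ - m t) 0 ^ 2 / σ t ^ 2)
        = Cf⁻¹ * ((√(2 * π) * exp 1)⁻¹ ^ d *
            exp (-(d : ℝ) * max (‖x‖ - m t) 0 ^ 2 / σ t ^ 2)) := by
          rw [mul_inv, inv_pow, mul_assoc]
      _ ≤ _ := by gcongr
      _ ≤ _ := hlow
  · calc _ ≤ _ := hupp
      _ ≤ Cf * (2 ^ d * exp (-max (‖x‖ - m t) 0 ^ 2 / (2 * σ t ^ 2))) := by gcongr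
      _ ≤ _ := by rw [← mul_assoc]; gcongr

/-- Upper and lower Gaussian-type bounds on the diffused density `p_t`:
there exists `C ≥ 1` (depending only on `d` and `C_f`) with
`C⁻¹ exp(−d (‖x‖∞ − m_t)₊² / σ_t²) ≤ p_t(x) ≤ C exp(−(‖x‖∞ − m_t)₊² / (2σ_t²))`. -/
theorem statement0
    (d : ℕ) (hd : 1 ≤ d)
    (βlo βhi : ℝ) (hβlo : 0 < βlo) (hβhi : βlo ≤ βhi)
    (β : ℝ → ℝ) (hβc : ContinuousOn β (Set.Ici 0))
    (hβb : ∀ t : ℝ, 0 ≤ t → βlo ≤ β t ∧ β t ≤ βhi)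
    (m σ : ℝ → ℝ)
    (hm : ∀ t : ℝ, m t = Real.exp (-(∫ s in (0:ℝ)..t, β s)))
    (hσ : ∀ t : ℝ, σ t = Real.sqrt (1 - (m t) ^ 2))
    (Cf : ℝ) (hCf : 1 ≤ Cf)
    (p0 : (Fin d → ℝ) → ℝ) (hp0meas : Measurable p0)
    (hp0nn : ∀ x, 0 ≤ p0 x) (hp0int : (∫ x, p0 x) = 1)
    (hp0supp : ∀ x : Fin d → ℝ, ¬ (∀ i, |x i| ≤ 1) → p0 x = 0)
    (hp0bd : ∀ x : Fin d → ℝ, (∀ i, |x i| ≤ 1) → Cf⁻¹ ≤ p0 x ∧ p0 x ≤ Cf)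
    (p : ℝ → (Fin d → ℝ) → ℝ)
    (hp : ∀ t : ℝ, ∀ x : Fin d → ℝ, p t x =
      ∫ y : Fin d → ℝ, p0 y * ((2 * Real.pi * (σ t) ^ 2) ^ (-(d : ℝ) / 2) *
        Real.exp (-(∑ i, (x i - m t * y i) ^ 2) / (2 * (σ t) ^ 2)))) :
    ∃ C : ℝ, 1 ≤ C ∧ ∀ t : ℝ, 0 < t → ∀ x : Fin d → ℝ,
      C⁻¹ * Real.exp (-(d : ℝ) * (max (‖x‖ - m t) 0) ^ 2 / (σ t) ^ 2) ≤ p t x ∧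
      p t x ≤ C * Real.exp (-(max (‖x‖ - m t) 0) ^ 2 / (2 * (σ t) ^ 2)) :=
  statement0_general d βlo βhi hβlo β hβc hβb m σ hm hσ Cf hCf p0 hp0meas hp0nn hp0supp hp0bd p hp
end

section
/- Let A > 0, 0 < m ≤ 1, σ > 0, x ∈ ℝ and 0 < ε < 1. Then for every integer k with k ≥ max{4eA², ⌈log₂(ε⁻¹)⌉} and every y ∈ [(x − σA)/m, (x + σA)/m], the truncated Taylor expansion of the Gaussian kernel satisfies | exp(−(x − m y)²/(2σ²)) − Σ_{s=0}^{k−1} ((−1)^s / s!) · (x − m y)^{2s} / (2^s σ^{2s}) | ≤ ε. -/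
/-!
With `t = (x - m y)² / (2σ²) ≤ A² / 2` the sum is the degree-`(k-1)` Taylor polynomial of
`exp (-t)`, whose error is at most `2 tᵏ / k!` as long as `t ≤ (k + 1) / 2`. The bound
`k! ≥ (k / e)ᵏ` and `k ≥ 4 e A²` turn this into `2 (e t / k)ᵏ ≤ 2 · 8⁻ᵏ ≤ 2⁻ᵏ`, and
`k ≥ log₂ ε⁻¹` gives `2⁻ᵏ ≤ ε`.
-/

open Real Finset Nat

namespace Real

theorem abs_exp_sub_sum_range_le {x : ℝ} {n : ℕ} (hx : |x| / n.succ ≤ 1 / 2) :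
    |exp x - ∑ i ∈ range n, x ^ i / i !| ≤ |x| ^ n / n ! * 2 := by
  exact_mod_cast Complex.exp_bound' (x := x) (n := n) (by rwa [Complex.norm_real, norm_eq_abs])

theorem pow_div_factorial_le_exp_one_mul_div_pow {t : ℝ} (ht : 0 ≤ t) (n : ℕ) :
    t ^ n / n ! ≤ (exp 1 * t / n) ^ n := by
  rcases n.eq_zero_or_pos with rfl | hn
  · simp
  have hstirling : (n : ℝ) ^ n / n ! ≤ exp 1 ^ n := by
    simpa [← exp_nat_mul] using pow_div_factorial_le_exp (x := n) (Nat.cast_nonneg n) n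
  rw [div_pow, mul_pow, le_div_iff₀ (by positivity)]
  calc t ^ n / n ! * n ^ n = n ^ n / n ! * t ^ n := by ring
    _ ≤ exp 1 ^ n * t ^ n := by gcongr

end Real

theorem sum_gaussian_taylor_eq (z σ : ℝ) (k : ℕ) :
    ∑ s ∈ range k, ((-1 : ℝ) ^ s / s !) * z ^ (2 * s) / (2 ^ s * σ ^ (2 * s)) =
      ∑ s ∈ range k, (-(z ^ 2 / (2 * σ ^ 2))) ^ s / s ! := by
  refine sum_congr rfl fun s _ => ?_
  rw [neg_pow (z ^ 2 / (2 * σ ^ 2)), div_pow, mul_pow, pow_mul, pow_mul]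
  ring

theorem statement11_general
    (A : ℝ) (m : ℝ) (hm0 : 0 < m)
    (σ : ℝ) (hσ : 0 < σ) (x : ℝ)
    (ε : ℝ) (hε0 : 0 < ε) (hε1 : ε < 1)
    (k : ℕ) (hk1 : 4 * Real.exp 1 * A ^ 2 ≤ (k : ℝ))
    (hk2 : (⌈Real.logb 2 ε⁻¹⌉ : ℝ) ≤ (k : ℝ))
    (y : ℝ) (hy1 : (x - σ * A) / m ≤ y) (hy2 : y ≤ (x + σ * A) / m) :
    |Real.exp (-(x - m * y) ^ 2 / (2 * σ ^ 2)) -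
        ∑ s ∈ Finset.range k,
          ((-1 : ℝ) ^ s / (Nat.factorial s : ℝ)) * (x - m * y) ^ (2 * s) /
            (2 ^ s * σ ^ (2 * s))| ≤ ε := by
  set t := (x - m * y) ^ 2 / (2 * σ ^ 2) with ht
  have ht0 : 0 ≤ t := by positivity
  have htA : t ≤ A ^ 2 / 2 := by
    have hdist : |x - m * y| ≤ σ * A := abs_le.2
      ⟨by linarith [(le_div_iff₀ hm0).1 hy2], by linarith [(div_le_iff₀ hm0).1 hy1]⟩
    have hsq : (x - m * y) ^ 2 ≤ (σ * A) ^ 2 := sq_le_sq' (abs_le.1 hdist).1 (abs_le.1 hdist).2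
    rw [ht, div_le_div_iff₀ (by positivity) two_pos]
    nlinarith
  have hk_pos : 0 < k := by
    have : 0 < logb 2 ε⁻¹ := logb_pos one_lt_two ((one_lt_inv₀ hε0).2 hε1)
    have : (0 : ℝ) < k := (Int.cast_pos.2 (Int.ceil_pos.2 this)).trans_le hk2
    exact_mod_cast this
  have hεk : (2 : ℝ)⁻¹ ^ k ≤ ε := by
    have hlog : logb 2 ε⁻¹ ≤ k := (Int.le_ceil _).trans hk2
    rw [logb_le_iff_le_rpow one_lt_two (by positivity), rpow_natCast] at hlog
    rwa [inv_pow, inv_le_comm₀ (by positivity) hε0]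
  have hrate : exp 1 * t / k ≤ 8⁻¹ := by
    rw [div_le_iff₀ (by exact_mod_cast hk_pos)]
    nlinarith [exp_pos 1]
  have hsmall : |-t| / k.succ ≤ 1 / 2 := by
    have : t ≤ k / 8 := by nlinarith [add_one_le_exp 1]
    rw [abs_neg, abs_of_nonneg ht0, div_le_iff₀ (by positivity)]
    push_cast
    linarith
  rw [sum_gaussian_taylor_eq, neg_div]
  calc _ ≤ |-t| ^ k / k ! * 2 := abs_exp_sub_sum_range_le hsmall
    _ = t ^ k / k ! * 2 := by rw [abs_neg, abs_of_nonneg ht0]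
    _ ≤ (exp 1 * t / k) ^ k * 2 := by gcongr; exact pow_div_factorial_le_exp_one_mul_div_pow ht0 k
    _ ≤ 8⁻¹ ^ k * 4 ^ k := by
        gcongr
        calc (2 : ℝ) ≤ 4 ^ 1 := by norm_num
          _ ≤ 4 ^ k := pow_le_pow_right₀ (by norm_num) hk_pos
    _ = 2⁻¹ ^ k := by rw [← mul_pow]; norm_num
    _ ≤ ε := hεk

/-- Truncated Taylor expansion of the Gaussian kernel: for
`k ≥ max{4eA², ⌈log₂ ε⁻¹⌉}` and `y ∈ [(x − σA)/m, (x + σA)/m]`, the degree-`(2k−2)` Taylor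
polynomial of `exp(−(x − my)²/(2σ²))` is `ε`-accurate. -/
theorem statement11
    (A : ℝ) (hA : 0 < A) (m : ℝ) (hm0 : 0 < m) (hm1 : m ≤ 1)
    (σ : ℝ) (hσ : 0 < σ) (x : ℝ)
    (ε : ℝ) (hε0 : 0 < ε) (hε1 : ε < 1)
    (k : ℕ) (hk1 : 4 * Real.exp 1 * A ^ 2 ≤ (k : ℝ))
    (hk2 : (⌈Real.logb 2 ε⁻¹⌉ : ℝ) ≤ (k : ℝ))
    (y : ℝ) (hy1 : (x - σ * A) / m ≤ y) (hy2 : y ≤ (x + σ * A) / m) :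
    |Real.exp (-(x - m * y) ^ 2 / (2 * σ ^ 2)) -
        ∑ s ∈ Finset.range k,
          ((-1 : ℝ) ^ s / (Nat.factorial s : ℝ)) * (x - m * y) ^ (2 * s) /
            (2 ^ s * σ ^ (2 * s))| ≤ ε :=
  statement11_general A m hm0 σ hσ x ε hε0 hε1 k hk1 hk2 y hy1 hy2
end

section
/- Let d ∈ ℕ, k ∈ ℕ, and let 0 < m ≤ 1 and σ > 0 satisfy m² + σ² = 1. Let α ∈ ℤ_+^d be a multi-index with Σ_i α_i ≤ k, and let f : ℝ^d → ℝ be measurable, supported on [−1,1]^d, with |f| ≤ C_b. Then there exists a constant C, depending only on k and d, such that for every 0 < ε < 1/2 and every x ∈ ℝ^d, | ∫_{ℝ^d} Π_{i=1}^d ((m y_i − x_i)/σ)^{α_i} f(y) (2πσ²)^{−d/2} exp(−‖m y − x‖²/(2σ²)) dy − ∫_{A^x} Π_{i=1}^d ((m y_i − x_i)/σ)^{α_i} f(y) (2πσ²)^{−d/2} exp(−‖m y − x‖²/(2σ²)) dy | ≤ C · C_b · ε, where A^x = Π_{i=1}^d [x_i/m − (σ C/m)√(log ε⁻¹), x_i/m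 + (σ C/m)√(log ε⁻¹)]. -/
/-!
Write `z = (m y - x) / σ`. A quarter of the Gaussian exponent absorbs the polynomial factor,
`|t|^a e^{-t²/4} ≤ a! e`, and what is left is `e^{-|z|²/8}` times the wider Gaussian
`(2πσ²)^{-d/2} e^{-|z|²/8}`. Off the box `A^x` some `|z_i| ≥ C √(log ε⁻¹)`, so for `C² ≥ 8` the
first factor is at most `ε`. The wider Gaussian integrates over `[-1, 1]^d` to at most `(2√2)^d`
uniformly in `m` and `σ`: coordinatewise, if `σ² ≥ 1/2` its density is at most `1`, and otherwise
`m² ≥ 1/2` and its integral over all of `ℝ` is `2 / m ≤ 2√2`.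
-/

open MeasureTheory Real Set

open scoped Nat

lemma abs_pow_mul_exp_neg_sq_div_four_le (t : ℝ) (a : ℕ) :
    |t| ^ a * exp (-t ^ 2 / 4) ≤ a ! * exp 1 := by
  have hpow : |t| ^ a ≤ a ! * exp |t| := by
    have := pow_div_factorial_le_exp (x := |t|) (abs_nonneg t) a
    rwa [div_le_iff₀ (by positivity), mul_comm] at this
  calc |t| ^ a * exp (-t ^ 2 / 4) ≤ a ! * exp |t| * exp (-t ^ 2 / 4) := by gcongr
    _ = a ! * exp (1 - (|t| - 2) ^ 2 / 4) := by
        rw [mul_assoc, ← exp_add]; congr 2; rw [← sq_abs t]; ring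
    _ ≤ a ! * exp 1 := by gcongr; linarith [sq_nonneg (|t| - 2)]

lemma abs_prod_pow_mul_exp_neg_sum_sq_div_four_le {ι : Type*} [Fintype ι] (z : ι → ℝ)
    {α : ι → ℕ} {k : ℕ} (hα : ∀ i, α i ≤ k) :
    |∏ i, z i ^ α i| * exp (-(∑ i, z i ^ 2) / 4) ≤ (k ! * exp 1) ^ Fintype.card ι := by
  have hexp : exp (-(∑ i, z i ^ 2) / 4) = ∏ i, exp (-z i ^ 2 / 4) := by
    rw [← exp_sum, ← Finset.sum_div, Finset.sum_neg_distrib]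
  rw [hexp, Finset.abs_prod, ← Finset.prod_mul_distrib, ← Finset.card_univ,
    ← Finset.prod_const]
  refine Finset.prod_le_prod (fun i _ => by positivity) fun i _ => ?_
  rw [abs_pow]
  calc |z i| ^ α i * exp (-z i ^ 2 / 4) ≤ (α i) ! * exp 1 := abs_pow_mul_exp_neg_sq_div_four_le _ _
    _ ≤ k ! * exp 1 := by gcongr; exact hα i

lemma abs_prod_pow_mul_mul_exp_neg_sum_sq_le {ι : Type*} [Fintype ι] (z : ι → ℝ)
    {α : ι → ℕ} {k : ℕ} (hα : ∀ i, α i ≤ k) {F B c : ℝ} (hF : |F| ≤ B) (hc : 0 ≤ c) :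
    |(∏ i, z i ^ α i) * F * (c * exp (-(∑ i, z i ^ 2) / 2))|
      ≤ B * (k ! * exp 1) ^ Fintype.card ι * exp (-(∑ i, z i ^ 2) / 8) *
          (c * exp (-(∑ i, z i ^ 2) / 8)) := by
  have hsplit : exp (-(∑ i, z i ^ 2) / 2) = exp (-(∑ i, z i ^ 2) / 4) *
      exp (-(∑ i, z i ^ 2) / 8) * exp (-(∑ i, z i ^ 2) / 8) := by
    rw [← exp_add, ← exp_add]; ring_nf
  have hB : 0 ≤ B := (abs_nonneg F).trans hF
  rw [hsplit, abs_mul, abs_mul, abs_of_nonneg (by positivity : 0 ≤ c * _)]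
  calc |∏ i, z i ^ α i| * |F| * (c * (exp (-(∑ i, z i ^ 2) / 4) *
        exp (-(∑ i, z i ^ 2) / 8) * exp (-(∑ i, z i ^ 2) / 8)))
      = |F| * (|∏ i, z i ^ α i| * exp (-(∑ i, z i ^ 2) / 4)) * exp (-(∑ i, z i ^ 2) / 8) *
          (c * exp (-(∑ i, z i ^ 2) / 8)) := by ring
    _ ≤ _ := by
      gcongr
      exact abs_prod_pow_mul_exp_neg_sum_sq_div_four_le z hα

lemma exp_neg_sum_sq_div_le_exp_neg {ι : Type*} [Fintype ι] (z : ι → ℝ) {b L : ℝ} (hb : 0 < b)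
    {i : ι} (hi : b * L ≤ z i ^ 2) :
    exp (-(∑ j, z j ^ 2) / b) ≤ exp (-L) := by
  have := Finset.single_le_sum (fun j _ => sq_nonneg (z j)) (Finset.mem_univ i)
  gcongr
  rw [neg_div, neg_le_neg_iff, le_div_iff₀ hb]
  linarith

lemma sq_le_sq_div_of_notMem_Icc {m σ C r c t : ℝ} (hm : 0 < m) (hσ : 0 < σ) (hCr : 0 ≤ C * r)
    (ht : t ∉ Icc (c / m - σ * C / m * r) (c / m + σ * C / m * r)) :
    (C * r) ^ 2 ≤ ((m * t - c) / σ) ^ 2 := by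
  rw [mem_Icc, not_and_or, not_le, not_le] at ht
  apply sq_le_sq.mpr
  rw [abs_of_nonneg hCr, le_abs, ← neg_div, le_div_iff₀ hσ, le_div_iff₀ hσ]
  rcases ht with ht | ht
  · right
    have := mul_lt_mul_of_pos_left ht hm
    field_simp at this
    linarith
  · left
    have := mul_lt_mul_of_pos_left ht hm
    field_simp at this
    linarith

lemma exp_neg_sum_sq_div_le_one {ι : Type*} [Fintype ι] (z : ι → ℝ) {b : ℝ} (hb : 0 ≤ b) :
    exp (-(∑ i, z i ^ 2) / b) ≤ 1 :=
  exp_le_one_iff.2 (div_nonpos_of_nonpos_of_nonneg (neg_nonpos.2 (by positivity)) hb)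

lemma neg_sum_sq_div_mul_sq {ι : Type*} [Fintype ι] (a : ι → ℝ) {σ : ℝ} (hσ : σ ≠ 0) (b : ℝ) :
    -(∑ i, a i ^ 2) / (b * σ ^ 2) = -(∑ i, (a i / σ) ^ 2) / b := by
  simp_rw [div_pow, ← Finset.sum_div]
  field_simp

lemma abs_integrand_le_indicator {ι : Type*} [Fintype ι] {k : ℕ} {m σ c B : ℝ} (hσ : σ ≠ 0)
    (hc : 0 ≤ c) {α : ι → ℕ} (hα : ∀ i, α i ≤ k) {f : (ι → ℝ) → ℝ} {s : Set (ι → ℝ)}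
    (hsupp : ∀ y ∉ s, f y = 0) (hbound : ∀ y, |f y| ≤ B) (x y : ι → ℝ) :
    |(∏ i, ((m * y i - x i) / σ) ^ α i) * f y *
        (c * exp (-(∑ i, (m * y i - x i) ^ 2) / (2 * σ ^ 2)))|
      ≤ B * (k ! * exp 1) ^ Fintype.card ι * exp (-(∑ i, ((m * y i - x i) / σ) ^ 2) / 8) *
        s.indicator (fun y => c * exp (-(∑ i, ((m * y i - x i) / σ) ^ 2) / 8)) y := by
  by_cases hy : y ∈ s
  · rw [indicator_of_mem hy, neg_sum_sq_div_mul_sq _ hσ]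
    exact abs_prod_pow_mul_mul_exp_neg_sum_sq_le _ hα (hbound y) hc
  · simp [hsupp y hy, indicator_of_notMem hy]


lemma integrable_exp_neg_mul_sq_affine {a b : ℝ} (ha : a ≠ 0) (hb : 0 < b) (c : ℝ) :
    Integrable fun t : ℝ => exp (-b * (a * t - c) ^ 2) :=
  ((integrable_exp_neg_mul_sq hb).comp_sub_right c).comp_mul_left' ha

lemma integral_exp_neg_mul_sq_affine (a b c : ℝ) :
    ∫ t : ℝ, exp (-b * (a * t - c) ^ 2) = |a⁻¹| * √(π / b) := by
  rw [Measure.integral_comp_mul_left (fun s => exp (-b * (s - c) ^ 2)) a,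
    integral_sub_right_eq_self (fun s => exp (-b * s ^ 2)) c, integral_gaussian, smul_eq_mul]

lemma setIntegral_Icc_gaussian_le {m σ : ℝ} (hm : 0 < m) (hσ : 0 < σ)
    (hmσ : m ^ 2 + σ ^ 2 = 1) (c : ℝ) :
    ∫ t in Icc (-1 : ℝ) 1, (√(2 * π * σ ^ 2))⁻¹ * exp (-((m * t - c) / σ) ^ 2 / 8)
      ≤ 2 * √2 := by
  have hexp : ∀ t, -((m * t - c) / σ) ^ 2 / 8 = -(8 * σ ^ 2)⁻¹ * (m * t - c) ^ 2 := by
    intro t; field_simp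
  simp_rw [hexp]
  rcases le_or_gt (1 / 2) (σ ^ 2) with hσ2 | hm2
  · have hbound : ∀ t ∈ Icc (-1 : ℝ) 1,
        ‖(√(2 * π * σ ^ 2))⁻¹ * exp (-(8 * σ ^ 2)⁻¹ * (m * t - c) ^ 2)‖ ≤ 1 := by
      intro t _
      rw [norm_of_nonneg (by positivity)]
      have : 1 ≤ √(2 * π * σ ^ 2) := by
        rw [one_le_sqrt]; nlinarith [pi_gt_three]
      refine mul_le_one₀ (inv_le_one_of_one_le₀ this) (by positivity) ?_
      rw [exp_le_one_iff, neg_mul]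
      exact neg_nonpos.mpr (by positivity)
    have := norm_setIntegral_le_of_norm_le_const (μ := volume) measure_Icc_lt_top hbound
    rw [Real.volume_real_Icc] at this
    refine (le_norm_self _).trans (this.trans ?_)
    norm_num
  · have hint := (integrable_exp_neg_mul_sq_affine hm.ne' (by positivity : 0 < (8 * σ ^ 2)⁻¹)
      c).const_mul (√(2 * π * σ ^ 2))⁻¹
    calc _ ≤ ∫ t, (√(2 * π * σ ^ 2))⁻¹ * exp (-(8 * σ ^ 2)⁻¹ * (m * t - c) ^ 2) :=
          setIntegral_le_integral hint (Filter.Eventually.of_forall fun t => by positivity)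
      _ = 2 / m := by
          rw [integral_const_mul, integral_exp_neg_mul_sq_affine, div_inv_eq_mul,
            show π * (8 * σ ^ 2) = 2 ^ 2 * (2 * π * σ ^ 2) by ring,
            sqrt_mul (by norm_num : (0 : ℝ) ≤ 2 ^ 2),
            sqrt_sq (by norm_num : (0 : ℝ) ≤ 2), abs_of_pos (inv_pos.mpr hm)]
          have hs : 0 < √(2 * π * σ ^ 2) := by positivity
          generalize √(2 * π * σ ^ 2) = s at hs ⊢
          field_simp
      _ ≤ 2 * √2 := by
          rw [div_le_iff₀ hm]
          have : 1 ≤ √2 * m := by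
            rw [← sqrt_sq hm.le, ← sqrt_mul (by norm_num), one_le_sqrt]; linarith
          linarith

lemma rpow_neg_card_div_two_eq_prod {ι : Type*} [Fintype ι] {a : ℝ} (ha : 0 ≤ a) :
    a ^ (-(Fintype.card ι : ℝ) / 2) = ∏ _i : ι, (√a)⁻¹ := by
  rw [Finset.prod_const, Finset.card_univ, sqrt_eq_rpow, ← rpow_neg ha, ← rpow_natCast,
    ← rpow_mul ha]
  ring_nf

lemma setIntegral_pi_Icc_gaussian_le {ι : Type*} [Fintype ι] {m σ : ℝ} (hm : 0 < m) (hσ : 0 < σ)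
    (hmσ : m ^ 2 + σ ^ 2 = 1) (x : ι → ℝ) :
    ∫ y in univ.pi fun _ : ι => Icc (-1 : ℝ) 1,
        (2 * π * σ ^ 2) ^ (-(Fintype.card ι : ℝ) / 2) *
          exp (-(∑ i, ((m * y i - x i) / σ) ^ 2) / 8)
      ≤ (2 * √2) ^ Fintype.card ι := by
  have hprod : ∀ y : ι → ℝ, (2 * π * σ ^ 2) ^ (-(Fintype.card ι : ℝ) / 2) *
      exp (-(∑ i, ((m * y i - x i) / σ) ^ 2) / 8) =
        ∏ i, (√(2 * π * σ ^ 2))⁻¹ * exp (-((m * y i - x i) / σ) ^ 2 / 8) := by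
    intro y
    rw [Finset.prod_mul_distrib, rpow_neg_card_div_two_eq_prod (by positivity), ← exp_sum,
      ← Finset.sum_div, Finset.sum_neg_distrib]
  simp_rw [hprod]
  rw [volume_pi, Measure.restrict_pi_pi, integral_fintype_prod_eq_prod
      fun i t => (√(2 * π * σ ^ 2))⁻¹ * exp (-((m * t - x i) / σ) ^ 2 / 8),
    ← Finset.card_univ, ← Finset.prod_const]
  exact Finset.prod_le_prod (fun i _ => setIntegral_nonneg measurableSet_Icc
    fun t _ => by positivity) fun i _ => setIntegral_Icc_gaussian_le hm hσ hmσ (x i)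

lemma abs_integral_sub_setIntegral_le {X : Type*} [MeasurableSpace X] {μ : Measure X}
    {g ψ : X → ℝ} {s : Set X} {ε : ℝ} (hs : MeasurableSet s) (hgm : AEStronglyMeasurable g μ)
    (hψ : Integrable ψ μ) (hε : 0 ≤ ε) (hgψ : ∀ y, |g y| ≤ ψ y)
    (htail : ∀ y ∉ s, |g y| ≤ ε * ψ y) :
    |∫ y, g y ∂μ - ∫ y in s, g y ∂μ| ≤ ε * ∫ y, ψ y ∂μ := by
  have hg : Integrable g μ :=
    hψ.mono' hgm (ae_of_all _ fun y => (norm_eq_abs (g y)).trans_le (hgψ y))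
  have hψ0 : ∀ y, 0 ≤ ψ y := fun y => (abs_nonneg _).trans (hgψ y)
  rw [← integral_add_compl hs hg, add_sub_cancel_left, ← norm_eq_abs, ← integral_const_mul]
  calc ‖∫ y in sᶜ, g y ∂μ‖ ≤ ∫ y in sᶜ, ε * ψ y ∂μ :=
        norm_integral_le_of_norm_le (hψ.const_mul ε).restrict
          ((ae_restrict_iff' hs.compl).2 (ae_of_all _ htail))
    _ ≤ ∫ y, ε * ψ y ∂μ :=
        setIntegral_le_integral (hψ.const_mul ε) (ae_of_all _ fun y => mul_nonneg hε (hψ0 y))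

lemma exp_neg_sum_sq_div_eight_le_of_notMem_pi_Icc {ι : Type*} [Fintype ι] {m σ C ε : ℝ}
    (hm : 0 < m) (hσ : 0 < σ) (hC0 : 0 ≤ C) (hC : 8 ≤ C ^ 2) (hε : 0 < ε) (hε1 : ε ≤ 1)
    {x y : ι → ℝ} (hy : y ∉ univ.pi fun i => Icc (x i / m - σ * C / m * √(log ε⁻¹))
      (x i / m + σ * C / m * √(log ε⁻¹))) :
    exp (-(∑ i, ((m * y i - x i) / σ) ^ 2) / 8) ≤ ε := by
  simp only [mem_pi, mem_univ, true_implies, not_forall] at hy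
  obtain ⟨i, hi⟩ := hy
  have hL : 0 ≤ log ε⁻¹ := log_nonneg ((one_le_inv₀ hε).mpr hε1)
  have hzi := sq_le_sq_div_of_notMem_Icc hm hσ (by positivity) hi
  rw [mul_pow, sq_sqrt hL] at hzi
  calc exp (-(∑ i, ((m * y i - x i) / σ) ^ 2) / 8) ≤ exp (-log ε⁻¹) :=
        exp_neg_sum_sq_div_le_exp_neg _ (by norm_num) (i := i) (by nlinarith)
    _ = ε := by rw [log_inv, neg_neg, exp_log hε]

lemma abs_integral_sub_setIntegral_pi_Icc_le {d k : ℕ} {m σ C B ε : ℝ} (hm : 0 < m) (hσ : 0 < σ)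
    (hmσ : m ^ 2 + σ ^ 2 = 1) (hC0 : 0 ≤ C) (hC : 8 ≤ C ^ 2) (hε : 0 < ε) (hε1 : ε ≤ 1)
    {α : Fin d → ℕ} (hα : ∀ i, α i ≤ k) {f : (Fin d → ℝ) → ℝ} (hf : Measurable f)
    (hsupp : ∀ y : Fin d → ℝ, ¬ (∀ i, |y i| ≤ 1) → f y = 0) (hbound : ∀ y, |f y| ≤ B)
    (x : Fin d → ℝ) :
    |(∫ y : Fin d → ℝ, (∏ i, ((m * y i - x i) / σ) ^ α i) * f y *
          ((2 * π * σ ^ 2) ^ (-(d : ℝ) / 2) * exp (-(∑ i, (m * y i - x i) ^ 2) / (2 * σ ^ 2)))) -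
        ∫ y in univ.pi fun i => Icc (x i / m - σ * C / m * √(log ε⁻¹))
            (x i / m + σ * C / m * √(log ε⁻¹)),
          (∏ i, ((m * y i - x i) / σ) ^ α i) * f y *
            ((2 * π * σ ^ 2) ^ (-(d : ℝ) / 2) * exp (-(∑ i, (m * y i - x i) ^ 2) / (2 * σ ^ 2)))|
      ≤ ε * (B * (k ! * exp 1) ^ d * (2 * √2) ^ d) := by
  set S : Set (Fin d → ℝ) := univ.pi fun _ => Icc (-1) 1
  set G : (Fin d → ℝ) → ℝ := fun y =>
    (2 * π * σ ^ 2) ^ (-(d : ℝ) / 2) * exp (-(∑ i, ((m * y i - x i) / σ) ^ 2) / 8)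
  have hS : MeasurableSet S := MeasurableSet.univ_pi fun _ => measurableSet_Icc
  have hG : Integrable (S.indicator G) := (integrable_indicator_iff hS).2
    ((by fun_prop : Continuous G).continuousOn.integrableOn_compact
      (isCompact_univ_pi fun _ => isCompact_Icc))
  have hB : 0 ≤ B := (abs_nonneg _).trans (hbound 0)
  have hψ0 : ∀ y, 0 ≤ B * (k ! * exp 1) ^ d * S.indicator G y := fun y =>
    mul_nonneg (by positivity) (indicator_nonneg (fun y _ => by positivity) y)
  have hpt := abs_integrand_le_indicator (m := m) hσ.ne'
    (by positivity : 0 ≤ (2 * π * σ ^ 2) ^ (-(d : ℝ) / 2)) hα (s := S)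
    (fun y hy => hsupp y fun h => hy (mem_univ_pi.2 fun i => abs_le.mp (h i))) hbound x
  rw [Fintype.card_fin] at hpt
  calc _ ≤ ε * ∫ y, B * (k ! * exp 1) ^ d * S.indicator G y :=
        abs_integral_sub_setIntegral_le (MeasurableSet.univ_pi fun _ => measurableSet_Icc)
          (by fun_prop) (hG.const_mul _) hε.le
          (fun y => (hpt y).trans <| by
            nlinarith [hψ0 y, exp_neg_sum_sq_div_le_one (fun i => (m * y i - x i) / σ)
              (by norm_num : (0 : ℝ) ≤ 8)])
          (fun y hy => (hpt y).trans <| by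
            nlinarith [hψ0 y, exp_neg_sum_sq_div_eight_le_of_notMem_pi_Icc hm hσ hC0 hC hε hε1 hy])
    _ = ε * (B * (k ! * exp 1) ^ d * ∫ y in S, G y) := by
        rw [integral_const_mul, integral_indicator hS]
    _ ≤ ε * (B * (k ! * exp 1) ^ d * (2 * √2) ^ d) := by
        gcongr
        simpa only [Fintype.card_fin] using setIntegral_pi_Icc_gaussian_le hm hσ hmσ x

theorem statement12_general (d k : ℕ) (Cb : ℝ) :
    ∃ C : ℝ, 0 < C ∧
      ∀ m σ : ℝ, 0 < m → m ≤ 1 → 0 < σ → m ^ 2 + σ ^ 2 = 1 →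
      ∀ α : Fin d → ℕ, (∑ i, α i) ≤ k →
      ∀ f : (Fin d → ℝ) → ℝ, Measurable f →
        (∀ y : Fin d → ℝ, ¬ (∀ i, |y i| ≤ 1) → f y = 0) → (∀ y, |f y| ≤ Cb) →
      ∀ ε : ℝ, 0 < ε → ε < 1/2 → ∀ x : Fin d → ℝ,
        |(∫ y : Fin d → ℝ,
            (∏ i, ((m * y i - x i) / σ) ^ (α i)) * f y *
              ((2 * Real.pi * σ ^ 2) ^ (-(d : ℝ) / 2) *
                Real.exp (-(∑ i, (m * y i - x i) ^ 2) / (2 * σ ^ 2)))) -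
          (∫ y in Set.univ.pi (fun i : Fin d =>
              Set.Icc (x i / m - (σ * C / m) * Real.sqrt (Real.log ε⁻¹))
                (x i / m + (σ * C / m) * Real.sqrt (Real.log ε⁻¹))),
            (∏ i, ((m * y i - x i) / σ) ^ (α i)) * f y *
              ((2 * Real.pi * σ ^ 2) ^ (-(d : ℝ) / 2) *
                Real.exp (-(∑ i, (m * y i - x i) ^ 2) / (2 * σ ^ 2))))| ≤ C * Cb * ε := by
  set K : ℝ := k ! * exp 1
  refine ⟨3 + (2 * √2 * K) ^ d, by positivity, ?_⟩
  intro m σ hm _ hσ hmσ α hα f hf hsupp hbound ε hε hε2 x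
  have hC : 3 ≤ 3 + (2 * √2 * K) ^ d := le_add_of_nonneg_right (by positivity)
  have hCb : 0 ≤ Cb := (abs_nonneg _).trans (hbound 0)
  have hαi : ∀ i, α i ≤ k := fun i =>
    (Finset.single_le_sum (fun j _ => Nat.zero_le (α j)) (Finset.mem_univ i)).trans hα
  refine (abs_integral_sub_setIntegral_pi_Icc_le hm hσ hmσ (by linarith) (by nlinarith) hε
    (by linarith) hαi hf hsupp hbound x).trans ?_
  calc ε * (Cb * K ^ d * (2 * √2) ^ d) = ε * Cb * (2 * √2 * K) ^ d := by ring
    _ ≤ ε * Cb * (3 + (2 * √2 * K) ^ d) := by gcongr; linarith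
    _ = (3 + (2 * √2 * K) ^ d) * Cb * ε := by ring

/-- Clipping of Gaussian-weighted integrals: a constant `C = C(k, d)` such that
restricting the integral to the box `A^x = Π_i [x_i/m ± (σC/m)√(log ε⁻¹)]` changes it by at most
`C·C_b·ε`. -/
theorem statement12 (d k : ℕ) (Cb : ℝ) (hCb : 0 ≤ Cb) :
    ∃ C : ℝ, 0 < C ∧
      ∀ m σ : ℝ, 0 < m → m ≤ 1 → 0 < σ → m ^ 2 + σ ^ 2 = 1 →
      ∀ α : Fin d → ℕ, (∑ i, α i) ≤ k →
      ∀ f : (Fin d → ℝ) → ℝ, Measurable f →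
        (∀ y : Fin d → ℝ, ¬ (∀ i, |y i| ≤ 1) → f y = 0) → (∀ y, |f y| ≤ Cb) →
      ∀ ε : ℝ, 0 < ε → ε < 1/2 → ∀ x : Fin d → ℝ,
        |(∫ y : Fin d → ℝ,
            (∏ i, ((m * y i - x i) / σ) ^ (α i)) * f y *
              ((2 * Real.pi * σ ^ 2) ^ (-(d : ℝ) / 2) *
                Real.exp (-(∑ i, (m * y i - x i) ^ 2) / (2 * σ ^ 2)))) -
          (∫ y in Set.univ.pi (fun i : Fin d =>
              Set.Icc (x i / m - (σ * C / m) * Real.sqrt (Real.log ε⁻¹))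
                (x i / m + (σ * C / m) * Real.sqrt (Real.log ε⁻¹))),
            (∏ i, ((m * y i - x i) / σ) ^ (α i)) * f y *
              ((2 * Real.pi * σ ^ 2) ^ (-(d : ℝ) / 2) *
                Real.exp (-(∑ i, (m * y i - x i) ^ 2) / (2 * σ ^ 2))))| ≤ C * Cb * ε :=
  statement12_general d k Cb
end

section
/- For every T > 0 there exists a coupling of p_0 and p_T, i.e. a probability measure γ on ℝ^d × ℝ^d whose first marginal has density p_0 and whose second marginal has density p_T, such that ∫ ‖x − y‖ dγ(x,y) ≤ ((1 − m_T) + σ_T) · √d; consequently, for 0 < T ≤ 1 the Wasserstein-1 transport cost between p_0 and p_T is at most C √T for a constant C depending only on d and β̄. -/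
/-!
Couple `X ∼ p₀` with `m_T X + σ_T Z`, where `Z` is a standard Gaussian independent of `X`: its
law has density `p_T`. Along this coupling `X - (m_T X + σ_T Z) = (1 - m_T) X - σ_T Z`, and
`‖X‖ ≤ √d` on the cube while `𝔼‖Z‖ ≤ √(𝔼‖Z‖²) = √d`, which gives the first bound. For the second,
`1 - m_T ≤ ∫₀ᵀ β ≤ β̄ T` and `σ_T² = (1 - m_T)(1 + m_T) ≤ 2 β̄ T`, and `T ≤ √T` when `T ≤ 1`.
-/

open MeasureTheory ProbabilityTheory Real Set
open scoped ENNReal NNReal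

namespace MeasureTheory.Measure

theorem pi_withDensity_ofReal {ι : Type*} [Fintype ι] {α : ι → Type*}
    [∀ i, MeasurableSpace (α i)] (μ : ∀ i, Measure (α i)) [∀ i, SigmaFinite (μ i)]
    {f : ∀ i, α i → ℝ} (hf : ∀ i, Integrable (f i) (μ i)) (hf0 : ∀ i x, 0 ≤ f i x) :
    Measure.pi (fun i ↦ (μ i).withDensity fun x ↦ ENNReal.ofReal (f i x)) =
      (Measure.pi μ).withDensity fun x ↦ ENNReal.ofReal (∏ i, f i (x i)) := by
  refine pi_eq fun s hs ↦ ?_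
  rw [withDensity_apply _ (MeasurableSet.univ_pi hs), restrict_pi_pi,
    ← ofReal_integral_eq_lintegral_ofReal, integral_fintype_prod_eq_prod,
    ENNReal.ofReal_prod_of_nonneg fun i _ ↦ integral_nonneg (hf0 i)]
  · refine Finset.prod_congr rfl fun i _ ↦ ?_
    rw [withDensity_apply _ (hs i),
      ofReal_integral_eq_lintegral_ofReal (hf i).integrableOn (ae_of_all _ (hf0 i))]
  · exact Integrable.fintype_prod_dep fun i ↦ (hf i).integrableOn
  · exact ae_of_all _ fun x ↦ Finset.prod_nonneg fun i _ ↦ hf0 i (x i)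

theorem map_add_prod_withDensity {X E : Type*} [MeasurableSpace X] [MeasurableSpace E]
    [AddCommGroup E] [MeasurableAdd₂ E] [MeasurableNeg E]
    (ρ : Measure X) (μ : Measure E) [SFinite ρ] [SFinite μ] [μ.IsAddRightInvariant]
    {φ : X → E} (hφ : Measurable φ) {g : E → ℝ≥0∞} (hg : Measurable g) :
    (ρ.prod (μ.withDensity g)).map (fun w ↦ φ w.1 + w.2) =
      μ.withDensity fun y ↦ ∫⁻ x, g (y - φ x) ∂ρ := by
  have hmeas : Measurable fun w : X × E ↦ φ w.1 + w.2 := by fun_prop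
  ext A hA
  rw [map_apply hmeas hA, prod_apply (hmeas hA), withDensity_apply _ hA,
    lintegral_lintegral_swap (by fun_prop)]
  refine lintegral_congr fun x ↦ ?_
  have hA' : MeasurableSet (Prod.mk x ⁻¹' ((fun w : X × E ↦ φ w.1 + w.2) ⁻¹' A)) :=
    measurable_prodMk_left (hmeas hA)
  rw [withDensity_apply _ hA', ← lintegral_indicator hA, ← lintegral_indicator hA',
    ← lintegral_add_right_eq_self (A.indicator fun y ↦ g (y - φ x)) (φ x)]
  refine lintegral_congr fun z ↦ ?_
  by_cases hz : z + φ x ∈ A <;> simp [hz, add_comm]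

end MeasureTheory.Measure

lemma isProbabilityMeasure_withDensity_ofReal {α : Type*} [MeasurableSpace α] {μ : Measure α}
    {p : α → ℝ} (hp0 : ∀ x, 0 ≤ p x) (hp : ∫ x, p x ∂μ = 1) :
    IsProbabilityMeasure (μ.withDensity fun x ↦ ENNReal.ofReal (p x)) := by
  have hint : Integrable p μ := Integrable.of_integral_ne_zero (by simp [hp])
  constructor
  rw [withDensity_apply _ .univ, Measure.restrict_univ,
    ← ofReal_integral_eq_lintegral_ofReal hint (ae_of_all _ hp0), hp, ENNReal.ofReal_one]

namespace ProbabilityTheory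

lemma integral_le_sqrt_integral_sq {Ω : Type*} {_ : MeasurableSpace Ω} {μ : Measure Ω}
    [IsProbabilityMeasure μ] {f : Ω → ℝ} (hf : MemLp f 2 μ) :
    ∫ ω, f ω ∂μ ≤ √(∫ ω, f ω ^ 2 ∂μ) := by
  have h := variance_nonneg f μ
  rw [variance_eq_sub hf] at h
  exact le_sqrt_of_sq_le (by simpa using h)

variable {ι : Type*} [Fintype ι]

lemma prod_gaussianPDFReal_zero (v : ℝ≥0) (z : ι → ℝ) :
    ∏ i, gaussianPDFReal 0 v (z i) =
      (2 * π * v) ^ (-(Fintype.card ι : ℝ) / 2) * exp (-(∑ i, z i ^ 2) / (2 * v)) := by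
  simp only [gaussianPDFReal, sub_zero, Finset.prod_mul_distrib, Finset.prod_const,
    Finset.card_univ, ← exp_sum, ← Finset.sum_div, Finset.sum_neg_distrib]
  rw [sqrt_eq_rpow, ← rpow_neg (by positivity), ← rpow_natCast, ← rpow_mul (by positivity)]
  ring_nf

lemma pi_gaussianReal_eq_withDensity {v : ℝ≥0} (hv : v ≠ 0) :
    Measure.pi (fun _ : ι ↦ gaussianReal 0 v) = volume.withDensity fun z ↦ ENNReal.ofReal
      ((2 * π * v) ^ (-(Fintype.card ι : ℝ) / 2) * exp (-(∑ i, z i ^ 2) / (2 * v))) := by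
  simp_rw [gaussianReal_of_var_ne_zero 0 hv, gaussianPDF_def, Measure.pi_withDensity_ofReal _
    (fun _ ↦ integrable_gaussianPDFReal 0 v) (fun _ ↦ gaussianPDFReal_nonneg 0 v),
    prod_gaussianPDFReal_zero, volume_pi]

lemma integral_sq_gaussianReal (v : ℝ≥0) : ∫ x, x ^ 2 ∂gaussianReal 0 v = v := by
  simpa using (variance_eq_integral (X := id) (μ := gaussianReal 0 v) aemeasurable_id).symm

lemma integral_sum_sq_pi_gaussianReal (v : ℝ≥0) :
    ∫ z, ∑ i, z i ^ 2 ∂Measure.pi (fun _ : ι ↦ gaussianReal 0 v) = Fintype.card ι * v := by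
  have h_eval (i : ι) : ∫ z, z i ^ 2 ∂Measure.pi (fun _ : ι ↦ gaussianReal 0 v) = v :=
    (integral_comp_eval (μ := fun _ : ι ↦ gaussianReal 0 v) (f := fun x : ℝ ↦ x ^ 2)
      (by fun_prop)).trans (integral_sq_gaussianReal v)
  rw [integral_finsetSum _ fun i _ ↦ integrable_comp_eval (μ := fun _ : ι ↦ gaussianReal 0 v)
    (f := fun x : ℝ ↦ x ^ 2) (memLp_id_gaussianReal 2).integrable_sq]
  simp [h_eval]

lemma memLp_sqrt_sum_sq_pi_gaussianReal (v : ℝ≥0) :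
    MemLp (fun z : ι → ℝ ↦ √(∑ i, z i ^ 2)) 2 (Measure.pi fun _ : ι ↦ gaussianReal 0 v) := by
  refine (memLp_two_iff_integrable_sq (Continuous.aestronglyMeasurable (by fun_prop))).2 ?_
  simp_rw [sq_sqrt (Finset.sum_nonneg fun i _ ↦ sq_nonneg _)]
  exact integrable_finsetSum _ fun i _ ↦ integrable_comp_eval
    (μ := fun _ : ι ↦ gaussianReal 0 v) (f := fun x : ℝ ↦ x ^ 2)
    (memLp_id_gaussianReal 2).integrable_sq

lemma integral_sqrt_sum_sq_pi_gaussianReal_le (v : ℝ≥0) :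
    ∫ z, √(∑ i, z i ^ 2) ∂Measure.pi (fun _ : ι ↦ gaussianReal 0 v) ≤ √(Fintype.card ι * v) := by
  refine (integral_le_sqrt_integral_sq (memLp_sqrt_sum_sq_pi_gaussianReal v)).trans_eq ?_
  simp_rw [sq_sqrt (Finset.sum_nonneg fun i _ ↦ sq_nonneg _), integral_sum_sq_pi_gaussianReal]

end ProbabilityTheory

section Euclidean

variable {ι : Type*} [Fintype ι]

lemma sqrt_sum_sq_eq_norm_toLp (v : ι → ℝ) : √(∑ i, v i ^ 2) = ‖WithLp.toLp 2 v‖ := by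
  simp [EuclideanSpace.norm_eq]

lemma sqrt_sum_sq_le_sqrt_card {x : ι → ℝ} (hx : ∀ i, |x i| ≤ 1) :
    √(∑ i, x i ^ 2) ≤ √(Fintype.card ι) := by
  refine sqrt_le_sqrt ((Finset.sum_le_sum fun i _ ↦ (sq_le_one_iff_abs_le_one _).2 (hx i)).trans ?_)
  simp

lemma sqrt_sum_sq_sub_smul_add_le {a : ℝ} (ha : a ≤ 1) (x z : ι → ℝ) :
    √(∑ i, (x i - (a • x + z) i) ^ 2) ≤ (1 - a) * √(∑ i, x i ^ 2) + √(∑ i, z i ^ 2) := by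
  have hx : x - (a • x + z) = (1 - a) • x - z := by module
  simp_rw [← Pi.sub_apply x, hx, sqrt_sum_sq_eq_norm_toLp, WithLp.toLp_sub, WithLp.toLp_smul]
  refine (norm_sub_le _ _).trans_eq ?_
  rw [norm_smul, Real.norm_of_nonneg (sub_nonneg.2 ha)]

end Euclidean

section Coupling

variable {E : Type*} [AddCommGroup E] [Module ℝ E] [MeasurableSpace E] [MeasurableAdd₂ E]
  [MeasurableSMul ℝ E]

noncomputable def noiseCoupling (μ ν : Measure E) (a : ℝ) : Measure (E × E) :=
  (μ.prod ν).map fun w ↦ (w.1, a • w.1 + w.2)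

variable (μ ν : Measure E) (a : ℝ)

lemma measurable_fst_smul_add_snd : Measurable fun w : E × E ↦ (w.1, a • w.1 + w.2) := by
  fun_prop

instance [IsProbabilityMeasure μ] [IsProbabilityMeasure ν] :
    IsProbabilityMeasure (noiseCoupling μ ν a) :=
  Measure.isProbabilityMeasure_map (measurable_fst_smul_add_snd a).aemeasurable

lemma noiseCoupling_map_fst [IsProbabilityMeasure ν] :
    (noiseCoupling μ ν a).map Prod.fst = μ := by
  rw [noiseCoupling, Measure.map_map measurable_fst (measurable_fst_smul_add_snd a)]
  exact (measurePreserving_fst (μ := μ) (ν := ν)).map_eq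

lemma noiseCoupling_map_snd :
    (noiseCoupling μ ν a).map Prod.snd = (μ.prod ν).map fun w ↦ a • w.1 + w.2 :=
  Measure.map_map measurable_snd (measurable_fst_smul_add_snd a)

end Coupling

section Diffusion

variable {ι : Type*} [Fintype ι]

lemma integral_sqrt_sum_sq_noiseCoupling_le (μ ν : Measure (ι → ℝ))
    [IsProbabilityMeasure μ] [IsProbabilityMeasure ν] {a : ℝ} (ha : a ≤ 1)
    (hμ : ∀ᵐ x ∂μ, ∀ i, |x i| ≤ 1) (hν : Integrable (fun z ↦ √(∑ i, z i ^ 2)) ν) :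
    ∫ w, √(∑ i, (w.1 i - w.2 i) ^ 2) ∂noiseCoupling μ ν a ≤
      (1 - a) * √(Fintype.card ι) + ∫ z, √(∑ i, z i ^ 2) ∂ν := by
  have h_bound : ∀ᵐ w ∂μ.prod ν, √(∑ i, (w.1 i - (a • w.1 + w.2) i) ^ 2) ≤
      (1 - a) * √(Fintype.card ι) + √(∑ i, w.2 i ^ 2) :=
    (Measure.quasiMeasurePreserving_fst.ae hμ).mono fun w hw ↦
      (sqrt_sum_sq_sub_smul_add_le ha w.1 w.2).trans <| add_le_add_left
        (mul_le_mul_of_nonneg_left (sqrt_sum_sq_le_sqrt_card hw) (sub_nonneg.2 ha)) _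
  rw [noiseCoupling, integral_map (measurable_fst_smul_add_snd a).aemeasurable
    (Continuous.aestronglyMeasurable (by fun_prop))]
  refine (integral_mono_of_nonneg (ae_of_all _ fun _ ↦ sqrt_nonneg _)
    ((integrable_const _).add (hν.comp_snd μ)) h_bound).trans_eq ?_
  rw [integral_add' (integrable_const _) (hν.comp_snd μ), integral_const,
    integral_fun_snd fun z : ι → ℝ ↦ √(∑ i, z i ^ 2)]
  simp

lemma map_smul_add_prod_pi_gaussianReal {p : (ι → ℝ) → ℝ} (hmeas : Measurable p)
    (hp0 : ∀ x, 0 ≤ p x) (hint : Integrable p) (a : ℝ) {v : ℝ≥0} (hv : v ≠ 0) :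
    ((volume.withDensity fun x ↦ ENNReal.ofReal (p x)).prod
        (Measure.pi fun _ : ι ↦ gaussianReal 0 v)).map (fun w ↦ a • w.1 + w.2) =
    volume.withDensity fun y ↦ ENNReal.ofReal (∫ x, p x * ((2 * π * v) ^
      (-(Fintype.card ι : ℝ) / 2) * exp (-(∑ i, (y i - a * x i) ^ 2) / (2 * v)))) := by
  rw [pi_gaussianReal_eq_withDensity hv,
    Measure.map_add_prod_withDensity _ _ (by fun_prop) (by fun_prop)]
  congr 1
  funext y
  have h_int : Integrable fun x ↦ p x * ((2 * π * v) ^ (-(Fintype.card ι : ℝ) / 2) *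
      exp (-(∑ i, (y i - a * x i) ^ 2) / (2 * v))) := by
    refine hint.mul_bdd (c := (2 * π * v) ^ (-(Fintype.card ι : ℝ) / 2))
      (Continuous.aestronglyMeasurable (by fun_prop)) (ae_of_all _ fun x ↦ ?_)
    have : 0 ≤ ∑ i, (y i - a * x i) ^ 2 := Finset.sum_nonneg fun i _ ↦ sq_nonneg _
    rw [Real.norm_of_nonneg (by positivity)]
    exact mul_le_of_le_one_right (by positivity) (exp_le_one_iff.2
      (div_nonpos_of_nonpos_of_nonneg (neg_nonpos.2 this) (by positivity)))
  rw [lintegral_withDensity_eq_lintegral_mul _ (by fun_prop) (by fun_prop),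
    ofReal_integral_eq_lintegral_ofReal h_int
      (ae_of_all _ fun x ↦ mul_nonneg (hp0 x) (by positivity))]
  refine lintegral_congr fun x ↦ ?_
  simp only [Pi.mul_apply, ← ENNReal.ofReal_mul (hp0 x), Pi.sub_apply, Pi.smul_apply, smul_eq_mul]

theorem exists_coupling_gaussian_noising {p : (ι → ℝ) → ℝ} (hmeas : Measurable p)
    (hp0 : ∀ x, 0 ≤ p x) (hp1 : ∫ x, p x = 1) (hsupp : ∀ x, ¬ (∀ i, |x i| ≤ 1) → p x = 0)
    {a s : ℝ} (ha : a ≤ 1) (hs : 0 < s) :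
    ∃ γ : Measure ((ι → ℝ) × (ι → ℝ)), IsProbabilityMeasure γ ∧
      γ.map Prod.fst = volume.withDensity (fun x ↦ ENNReal.ofReal (p x)) ∧
      γ.map Prod.snd = volume.withDensity (fun y ↦ ENNReal.ofReal (∫ x, p x *
        ((2 * π * s ^ 2) ^ (-(Fintype.card ι : ℝ) / 2) *
          exp (-(∑ i, (y i - a * x i) ^ 2) / (2 * s ^ 2))))) ∧
      ∫ w, √(∑ i, (w.1 i - w.2 i) ^ 2) ∂γ ≤ ((1 - a) + s) * √(Fintype.card ι) := by
  have hint : Integrable p := Integrable.of_integral_ne_zero (by simp [hp1])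
  have := isProbabilityMeasure_withDensity_ofReal hp0 hp1
  set v : ℝ≥0 := ⟨s ^ 2, sq_nonneg s⟩
  have hv : v ≠ 0 := by rw [← NNReal.coe_ne_zero]; exact pow_ne_zero 2 hs.ne'
  refine ⟨noiseCoupling _ (Measure.pi fun _ : ι ↦ gaussianReal 0 v) a, inferInstance,
    noiseCoupling_map_fst .., ?_, ?_⟩
  · rw [noiseCoupling_map_snd, map_smul_add_prod_pi_gaussianReal hmeas hp0 hint a hv]
    rfl
  have h_cube : ∀ᵐ x ∂volume.withDensity (fun x ↦ ENNReal.ofReal (p x)), ∀ i, |x i| ≤ 1 :=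
    (ae_withDensity_iff (by fun_prop)).2 <| ae_of_all _ fun x hx ↦
      by_contra fun h ↦ hx (by simp [hsupp x h])
  calc _ ≤ (1 - a) * √(Fintype.card ι) +
        ∫ z, √(∑ i, z i ^ 2) ∂Measure.pi fun _ : ι ↦ gaussianReal 0 v :=
      integral_sqrt_sum_sq_noiseCoupling_le _ _ ha h_cube
        ((memLp_sqrt_sum_sq_pi_gaussianReal v).integrable one_le_two)
    _ ≤ (1 - a) * √(Fintype.card ι) + s * √(Fintype.card ι) := by
      gcongr
      refine (integral_sqrt_sum_sq_pi_gaussianReal_le v).trans_eq ?_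
      rw [sqrt_mul (Nat.cast_nonneg _), show (v : ℝ) = s ^ 2 from rfl, sqrt_sq hs.le, mul_comm]
    _ = ((1 - a) + s) * √(Fintype.card ι) := by ring

end Diffusion

lemma mul_le_intervalIntegral_and_le_mul {f : ℝ → ℝ} {T lo hi : ℝ} (hT : 0 ≤ T)
    (hf : ContinuousOn f (Icc 0 T)) (hbd : ∀ t ∈ Icc 0 T, lo ≤ f t ∧ f t ≤ hi) :
    lo * T ≤ ∫ t in 0..T, f t ∧ ∫ t in 0..T, f t ≤ hi * T := by
  have hf' : IntervalIntegrable f volume 0 T := (uIcc_of_le hT ▸ hf).intervalIntegrable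
  constructor
  · simpa [mul_comm] using intervalIntegral.integral_mono_on hT intervalIntegrable_const hf'
      fun t ht ↦ (hbd t ht).1
  · simpa [mul_comm] using intervalIntegral.integral_mono_on hT hf' intervalIntegrable_const
      fun t ht ↦ (hbd t ht).2

lemma one_sub_exp_neg_add_sqrt_le {I b T : ℝ} (hI : 0 ≤ I) (hb : 0 ≤ b) (hIb : I ≤ b * T)
    (hT : 0 ≤ T) (hT1 : T ≤ 1) :
    (1 - exp (-I)) + √(1 - exp (-I) ^ 2) ≤ (b + √(2 * b)) * √T := by
  have h_lin : 1 - exp (-I) ≤ I := by linarith [add_one_le_exp (-I)]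
  have h_exp : exp (-I) ≤ 1 := exp_le_one_iff.2 (neg_nonpos.2 hI)
  have hT_sqrt : T ≤ √T := by
    nlinarith [sq_sqrt hT, sqrt_nonneg T, sqrt_le_one.2 hT1]
  have h_sqrt : √(1 - exp (-I) ^ 2) ≤ √(2 * b) * √T := by
    rw [← sqrt_mul (by positivity)]
    exact sqrt_le_sqrt (by nlinarith [exp_pos (-I)])
  nlinarith [mul_le_mul_of_nonneg_left hT_sqrt hb]

theorem statement19_general
    (d : ℕ) (hd : 1 ≤ d)
    (βlo βhi : ℝ) (hβlo : 0 < βlo) (hβhi : βlo ≤ βhi)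
    (β : ℝ → ℝ) (hβc : ContinuousOn β (Set.Ici 0))
    (hβb : ∀ t : ℝ, 0 ≤ t → βlo ≤ β t ∧ β t ≤ βhi)
    (m σ : ℝ → ℝ)
    (hm : ∀ t : ℝ, m t = Real.exp (-(∫ s in (0:ℝ)..t, β s)))
    (hσ : ∀ t : ℝ, σ t = Real.sqrt (1 - (m t) ^ 2))
    (p0 : (Fin d → ℝ) → ℝ) (hp0meas : Measurable p0)
    (hp0nn : ∀ x, 0 ≤ p0 x) (hp0int : (∫ x, p0 x) = 1)
    (hp0supp : ∀ x : Fin d → ℝ, ¬ (∀ i, |x i| ≤ 1) → p0 x = 0)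
    (p : ℝ → (Fin d → ℝ) → ℝ)
    (hp : ∀ t : ℝ, ∀ x : Fin d → ℝ, p t x =
      ∫ y : Fin d → ℝ, p0 y * ((2 * Real.pi * (σ t) ^ 2) ^ (-(d : ℝ) / 2) *
        Real.exp (-(∑ i, (x i - m t * y i) ^ 2) / (2 * (σ t) ^ 2)))) :
    (∀ T : ℝ, 0 < T →
      ∃ γ : Measure ((Fin d → ℝ) × (Fin d → ℝ)), IsProbabilityMeasure γ ∧
        γ.map Prod.fst = volume.withDensity (fun x => ENNReal.ofReal (p0 x)) ∧
        γ.map Prod.snd = volume.withDensity (fun x => ENNReal.ofReal (p T x)) ∧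
        (∫ z : (Fin d → ℝ) × (Fin d → ℝ),
            Real.sqrt (∑ i, (z.1 i - z.2 i) ^ 2) ∂γ) ≤
          ((1 - m T) + σ T) * Real.sqrt d) ∧
    (∃ C : ℝ, 0 < C ∧ ∀ T : ℝ, 0 < T → T ≤ 1 →
      ∃ γ : Measure ((Fin d → ℝ) × (Fin d → ℝ)), IsProbabilityMeasure γ ∧
        γ.map Prod.fst = volume.withDensity (fun x => ENNReal.ofReal (p0 x)) ∧
        γ.map Prod.snd = volume.withDensity (fun x => ENNReal.ofReal (p T x)) ∧
        (∫ z : (Fin d → ℝ) × (Fin d → ℝ),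
            Real.sqrt (∑ i, (z.1 i - z.2 i) ^ 2) ∂γ) ≤ C * Real.sqrt T) := by
  have h_int (T : ℝ) (hT : 0 ≤ T) :
      βlo * T ≤ ∫ t in 0..T, β t ∧ ∫ t in 0..T, β t ≤ βhi * T :=
    mul_le_intervalIntegral_and_le_mul hT (hβc.mono Icc_subset_Ici_self)
      fun t ht ↦ hβb t ht.1
  have h_coupling (T : ℝ) (hT : 0 < T) : ∃ γ : Measure ((Fin d → ℝ) × (Fin d → ℝ)),
      IsProbabilityMeasure γ ∧
        γ.map Prod.fst = volume.withDensity (fun x => ENNReal.ofReal (p0 x)) ∧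
        γ.map Prod.snd = volume.withDensity (fun x => ENNReal.ofReal (p T x)) ∧
        ∫ z, √(∑ i, (z.1 i - z.2 i) ^ 2) ∂γ ≤ ((1 - m T) + σ T) * √d := by
    have hm1 : m T < 1 := by
      rw [hm, exp_lt_one_iff, neg_lt_zero]
      exact (mul_pos hβlo hT).trans_le (h_int T hT.le).1
    have hσ0 : 0 < σ T := by
      rw [hσ]
      exact sqrt_pos.2 (by nlinarith [hm T ▸ exp_pos _])
    obtain ⟨γ, hγ, h_fst, h_snd, h_cost⟩ :=
      exists_coupling_gaussian_noising hp0meas hp0nn hp0int hp0supp hm1.le hσ0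
    simp only [Fintype.card_fin] at h_snd h_cost
    simp_rw [hp T]
    exact ⟨γ, hγ, h_fst, h_snd, h_cost⟩
  refine ⟨h_coupling, (βhi + √(2 * βhi)) * √d, ?_, fun T hT hT1 ↦ ?_⟩
  · have : (0 : ℝ) < d := by exact_mod_cast hd
    have : 0 < βhi := hβlo.trans_le hβhi
    positivity
  obtain ⟨γ, hγ, h_fst, h_snd, h_cost⟩ := h_coupling T hT
  refine ⟨γ, hγ, h_fst, h_snd, h_cost.trans ?_⟩
  have h_bound := one_sub_exp_neg_add_sqrt_le (by linarith [(h_int T hT.le).1, mul_pos hβlo hT])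
    (hβlo.le.trans hβhi) (h_int T hT.le).2 hT.le hT1
  rw [← hm, ← hσ] at h_bound
  calc ((1 - m T) + σ T) * √d ≤ (βhi + √(2 * βhi)) * √T * √d := by gcongr
    _ = (βhi + √(2 * βhi)) * √d * √T := by ring

/-- A coupling of `p_0` and `p_T` with transport cost at most
`((1 − m_T) + σ_T)√d`; consequently `W₁(p_0, p_T) ≤ C√T` for `0 < T ≤ 1`, with
`C = C(d, β̄)`. -/
theorem statement19
    (d : ℕ) (hd : 1 ≤ d)
    (βlo βhi : ℝ) (hβlo : 0 < βlo) (hβhi : βlo ≤ βhi)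
    (β : ℝ → ℝ) (hβc : ContinuousOn β (Set.Ici 0))
    (hβb : ∀ t : ℝ, 0 ≤ t → βlo ≤ β t ∧ β t ≤ βhi)
    (m σ : ℝ → ℝ)
    (hm : ∀ t : ℝ, m t = Real.exp (-(∫ s in (0:ℝ)..t, β s)))
    (hσ : ∀ t : ℝ, σ t = Real.sqrt (1 - (m t) ^ 2))
    (Cf : ℝ) (hCf : 1 ≤ Cf)
    (p0 : (Fin d → ℝ) → ℝ) (hp0meas : Measurable p0)
    (hp0nn : ∀ x, 0 ≤ p0 x) (hp0int : (∫ x, p0 x) = 1)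
    (hp0supp : ∀ x : Fin d → ℝ, ¬ (∀ i, |x i| ≤ 1) → p0 x = 0)
    (hp0bd : ∀ x : Fin d → ℝ, (∀ i, |x i| ≤ 1) → Cf⁻¹ ≤ p0 x ∧ p0 x ≤ Cf)
    (p : ℝ → (Fin d → ℝ) → ℝ)
    (hp : ∀ t : ℝ, ∀ x : Fin d → ℝ, p t x =
      ∫ y : Fin d → ℝ, p0 y * ((2 * Real.pi * (σ t) ^ 2) ^ (-(d : ℝ) / 2) *
        Real.exp (-(∑ i, (x i - m t * y i) ^ 2) / (2 * (σ t) ^ 2)))) :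
    (∀ T : ℝ, 0 < T →
      ∃ γ : Measure ((Fin d → ℝ) × (Fin d → ℝ)), IsProbabilityMeasure γ ∧
        γ.map Prod.fst = volume.withDensity (fun x => ENNReal.ofReal (p0 x)) ∧
        γ.map Prod.snd = volume.withDensity (fun x => ENNReal.ofReal (p T x)) ∧
        (∫ z : (Fin d → ℝ) × (Fin d → ℝ),
            Real.sqrt (∑ i, (z.1 i - z.2 i) ^ 2) ∂γ) ≤
          ((1 - m T) + σ T) * Real.sqrt d) ∧
    (∃ C : ℝ, 0 < C ∧ ∀ T : ℝ, 0 < T → T ≤ 1 →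
      ∃ γ : Measure ((Fin d → ℝ) × (Fin d → ℝ)), IsProbabilityMeasure γ ∧
        γ.map Prod.fst = volume.withDensity (fun x => ENNReal.ofReal (p0 x)) ∧
        γ.map Prod.snd = volume.withDensity (fun x => ENNReal.ofReal (p T x)) ∧
        (∫ z : (Fin d → ℝ) × (Fin d → ℝ),
            Real.sqrt (∑ i, (z.1 i - z.2 i) ^ 2) ∂γ) ≤ C * Real.sqrt T) :=
  statement19_general d hd βlo βhi hβlo hβhi β hβc hβb m σ hm hσ p0 hp0meas hp0nn hp0int hp0supp p
    hp
end
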